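/- In the two-node toy-protocol network [a:X(a;d,b):∅ ∥ b:Y(b):∅] where the nodes are out of each other's range, after node a performs its cast the resulting state is [a:Y(a):∅ ∥ b:Y(b):∅], and from this state no deliver action is ever possible: no reachable state admits a transition labelled b:deliver(d). -/
import Mathlib


/-- The two nodes of the network. -/
inductive IP : Type
  | a
  | b
deriving DecidableEq

/-- Messages of the toy protocol: mg(data, dip). -/
inductive Msg (DATA : Type) : Type
  | mg (d : DATA) (dip : IP)

/-- States of the toy-protocol process:
X(ip; data, dip) ≝ broadcast(mg(data,dip)).Y(ip) and
Y(ip) ≝ receive(m).([m = mg(data,dip) ∧ dip = ip] deliver(data).Y(ip)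
                  + [m = mg(data,dip) ∧ dip ≠ ip] X(ip; data, dip)).
`eval` is the state after receiving m, before guard evaluation; `del` is the
state deliver(data).Y(ip) reached by evaluating the first guard. -/
inductive PState (DATA : Type) : Type
  | X (ip : IP) (d : DATA) (dip : IP)
  | Y (ip : IP)
  | eval (ip : IP) (m : Msg DATA)
  | del (ip : IP) (d : DATA)

/-- Labels of sequential processes. -/
inductive PLab (DATA : Type) : Type
  | bcast (m : Msg DATA)
  | recv (m : Msg DATA)
  | deliver (d : DATA)
  | tau

/-- Operational semantics of the toy-protocol process. -/
inductive PStep {DATA : Type} : PState DATA → PLab DATA → PState DATA → Prop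
  | bc {ip d dip} : PStep (.X ip d dip) (.bcast (.mg d dip)) (.Y ip)
  | rc {ip m} : PStep (.Y ip) (.recv m) (.eval ip m)
  | g1 {ip d} : PStep (.eval ip (.mg d ip)) .tau (.del ip d)
  | g2 {ip d dip} : dip ≠ ip → PStep (.eval ip (.mg d dip)) .tau (.X ip d dip)
  | dl {ip d} : PStep (.del ip d) (.deliver d) (.Y ip)

/-- Network-level labels. -/
inductive NLab (DATA : Type) : Type
  | cast (R : Set IP) (m : Msg DATA)
  | arrive (H K : Set IP) (m : Msg DATA)
  | deliver (ip : IP) (d : DATA)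
  | tau

/-- Network expressions: nodes ip:P:R and parallel compositions. -/
inductive Net (DATA : Type) : Type
  | nd (ip : IP) (P : PState DATA) (R : Set IP)
  | par (M N : Net DATA)

/-- AWN operational semantics for the network of toy-protocol nodes:
a broadcast by a node with range R becomes R:*cast(m); a receive becomes an
arrive at the node; a node may disregard (fail to receive) any message;
deliver and τ are inherited; at the parallel composition a cast of one side
synchronizes with an arrive of the other (H ⊆ R, K ∩ R = ∅), arrives
synchronize with arrives, and deliver/τ interleave. -/
inductive NStep {DATA : Type} : Net DATA → NLab DATA → Net DATA → Prop
  | castN {ip P R m P'} : PStep P (.bcast m) P' →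
      NStep (.nd ip P R) (.cast R m) (.nd ip P' R)
  | recvN {ip P R m P'} : PStep P (.recv m) P' →
      NStep (.nd ip P R) (.arrive {ip} ∅ m) (.nd ip P' R)
  | discN {ip P R m} : NStep (.nd ip P R) (.arrive ∅ {ip} m) (.nd ip P R)
  | dlvN {ip P R d P'} : PStep P (.deliver d) P' →
      NStep (.nd ip P R) (.deliver ip d) (.nd ip P' R)
  | tauN {ip P R P'} : PStep P .tau P' →
      NStep (.nd ip P R) .tau (.nd ip P' R)
  | castL {M M' N N' R H K m} : NStep M (.cast R m) M' →
      NStep N (.arrive H K m) N' → H ⊆ R → K ∩ R = ∅ →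
      NStep (.par M N) (.cast R m) (.par M' N')
  | castR {M M' N N' R H K m} : NStep N (.cast R m) N' →
      NStep M (.arrive H K m) M' → H ⊆ R → K ∩ R = ∅ →
      NStep (.par M N) (.cast R m) (.par M' N')
  | arrive {M M' N N' H K H' K' m} : NStep M (.arrive H K m) M' →
      NStep N (.arrive H' K' m) N' →
      NStep (.par M N) (.arrive (H ∪ H') (K ∪ K') m) (.par M' N')
  | dlvL {M M' N ip d} : NStep M (.deliver ip d) M' →
      NStep (.par M N) (.deliver ip d) (.par M' N)
  | dlvR {M N N' ip d} : NStep N (.deliver ip d) N' →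
      NStep (.par M N) (.deliver ip d) (.par M N')
  | tauL {M M' N} : NStep M .tau M' → NStep (.par M N) .tau (.par M' N)
  | tauR {M N N'} : NStep N .tau N' → NStep (.par M N) .tau (.par M N')

/-- Steps permitted by the encapsulation operator: cast actions (which become τ),
τ, and deliver actions; arrive actions are blocked (no newpkt messages occur
here). -/
def EncStep {DATA : Type} (M M' : Net DATA) : Prop :=
  ∃ l, NStep M l M' ∧
    match l with
    | .cast _ _ => True
    | .tau => True
    | .deliver _ _ => True
    | .arrive _ _ _ => False

lemma nodeY_arrive {DATA : Type} {ip : IP} {R : Set IP} {l : NLab DATA} {N' : Net DATA}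
    (h : NStep (.nd ip (.Y ip) R) l N') : ∃ H K m, l = .arrive H K m := by
  cases h with
  | castN h => cases h
  | recvN h => exact ⟨_, _, _, rfl⟩
  | discN => exact ⟨_, _, _, rfl⟩
  | dlvN h => cases h
  | tauN h => cases h

lemma stuck {DATA : Type} {M' : Net DATA}
    (h : EncStep (.par (.nd .a (.Y .a) (∅ : Set IP)) (.nd .b (.Y .b) (∅ : Set IP))) M') :
    False := by
  obtain ⟨l, hs, hl⟩ := h
  cases hs with
  | castL h1 _ _ _ => obtain ⟨_,_,_,h⟩ := nodeY_arrive h1; cases h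
  | castR h1 _ _ _ => obtain ⟨_,_,_,h⟩ := nodeY_arrive h1; cases h
  | arrive h1 h2 => exact hl
  | dlvL h1 => obtain ⟨_,_,_,h⟩ := nodeY_arrive h1; cases h
  | dlvR h1 => obtain ⟨_,_,_,h⟩ := nodeY_arrive h1; cases h
  | tauL h1 => obtain ⟨_,_,_,h⟩ := nodeY_arrive h1; cases h
  | tauR h1 => obtain ⟨_,_,_,h⟩ := nodeY_arrive h1; cases h

/-- In the network [a:X(a;d,b):∅ ∥ b:Y(b):∅], where the nodes are out of each
other's range, after node a performs its cast (synchronizing only with the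
non-arrival at b) the state is [a:Y(a):∅ ∥ b:Y(b):∅], and from this state no
reachable state admits a transition labelled b:deliver(d). -/
theorem toy_no_delivery {DATA : Type} (d : DATA) :
    NStep (.par (.nd .a (.X .a d .b) (∅ : Set IP)) (.nd .b (.Y .b) (∅ : Set IP)))
          (.cast ∅ (.mg d .b))
          (.par (.nd .a (.Y .a) (∅ : Set IP)) (.nd .b (.Y .b) (∅ : Set IP))) ∧
    ∀ M : Net DATA,
      Relation.ReflTransGen EncStep
        (.par (.nd .a (.Y .a) (∅ : Set IP)) (.nd .b (.Y .b) (∅ : Set IP))) M →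
      ∀ M', ¬ NStep M (.deliver .b d) M' := by
  constructor
  · exact NStep.castL (NStep.castN PStep.bc) NStep.discN (subset_refl _)
      (by simp)
  · intro M hM M' hd
    rcases Relation.ReflTransGen.cases_head hM with rfl | ⟨c, hc, _⟩
    · cases hd with
      | dlvL h1 => obtain ⟨_,_,_,h⟩ := nodeY_arrive h1; cases h
      | dlvR h1 => obtain ⟨_,_,_,h⟩ := nodeY_arrive h1; cases h
    · exact stuck hc
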